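/- arXiv:1111.0383 — 5 statements merged into one kernel-verified Lean document; each statement's English description precedes it below -/
import Mathlib

section
/- For every point p ∈ ℝ^{2n+1}, the value of the 1-form β at p on the vector X(p) satisfies β(p)(X(p)) = (2r⁴ − 2r² + 1)·(H(p) − 1 − ε), where r² = u² + v². In particular β(p)(X(p)) = 0 for every p on the hypersurface Σ̃ = {H = 1 + ε}. -/
noncomputable section
open scoped BigOperators RealInnerProductSpace

/-- Points of `ℝ^(2n+1)` with the Euclidean structure. -/
abbrev Pt (n : ℕ) : Type := EuclideanSpace ℝ (Fin (2*n+1))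

/-- The index of the `u`-coordinate. -/
def idxU (n : ℕ) : Fin (2*n+1) := ⟨0, by omega⟩
/-- The index of the `v`-coordinate (equal to `1` whenever `n ≥ 1`). -/
def idxV (n : ℕ) : Fin (2*n+1) := ⟨1 % (2*n+1), Nat.mod_lt _ (by omega)⟩
/-- The index of the `z`-coordinate (equal to `2` whenever `n ≥ 1`). -/
def idxZ (n : ℕ) : Fin (2*n+1) := ⟨2 % (2*n+1), Nat.mod_lt _ (by omega)⟩
/-- The index of the `xᵢ`-coordinate, `i = 0, …, n-2`. -/
def idxX {n : ℕ} (i : Fin (n-1)) : Fin (2*n+1) := ⟨3+2*i.val, by have := i.isLt; omega⟩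
/-- The index of the `yᵢ`-coordinate, `i = 0, …, n-2`. -/
def idxY {n : ℕ} (i : Fin (n-1)) : Fin (2*n+1) := ⟨4+2*i.val, by have := i.isLt; omega⟩

/-- The `u`-coordinate. -/
def uu {n : ℕ} (p : Pt n) : ℝ := p (idxU n)
/-- The `v`-coordinate. -/
def vv {n : ℕ} (p : Pt n) : ℝ := p (idxV n)
/-- The `z`-coordinate. -/
def zz {n : ℕ} (p : Pt n) : ℝ := p (idxZ n)
/-- The `xᵢ`-coordinate, `i = 0, …, n-2`. -/
def xx {n : ℕ} (i : Fin (n-1)) (p : Pt n) : ℝ := p (idxX i)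
/-- The `yᵢ`-coordinate, `i = 0, …, n-2`. -/
def yy {n : ℕ} (i : Fin (n-1)) (p : Pt n) : ℝ := p (idxY i)
/-- `r² = u² + v²`. -/
def r2 {n : ℕ} (p : Pt n) : ℝ := uu p ^ 2 + vv p ^ 2

/-- `H(p) = u² + v² + ε⁻²(z² + Σᵢ(xᵢ² + yᵢ²))`; the hypersurface `Σ̃` is `{H = 1+ε}`. -/
def Hfun {n : ℕ} (ε : ℝ) (p : Pt n) : ℝ :=
  r2 p + ε⁻¹ ^ 2 * (zz p ^ 2 + ∑ i : Fin (n-1), (xx i p ^ 2 + yy i p ^ 2))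

/-- `u`-component of the vector field `X`. -/
def Xu {n : ℕ} (ε : ℝ) (p : Pt n) : ℝ :=
  ε⁻¹ ^ 2 * (r2 p - 1) * zz p * uu p - (1 + 2*ε - 2 * ε⁻¹ ^ 2 * zz p ^ 2) * vv p
/-- `v`-component of the vector field `X`. -/
def Xv {n : ℕ} (ε : ℝ) (p : Pt n) : ℝ :=
  ε⁻¹ ^ 2 * (r2 p - 1) * zz p * vv p + (1 + 2*ε - 2 * ε⁻¹ ^ 2 * zz p ^ 2) * uu p
/-- `z`-component of the vector field `X`. -/
def Xz {n : ℕ} (ε : ℝ) (p : Pt n) : ℝ :=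
  (r2 p - 1) ^ 2 + (2 * r2 p - 1) * (ε⁻¹ ^ 2 * zz p ^ 2 - ε)
/-- `xᵢ`-component of the vector field `X`. -/
def Xx {n : ℕ} (ε : ℝ) (i : Fin (n-1)) (p : Pt n) : ℝ :=
  ε⁻¹ ^ 2 * (2 * r2 p - 1) * zz p * xx i p - ε⁻¹ ^ 2 * (2 * r2 p ^ 2 - 2 * r2 p + 1) * yy i p
/-- `yᵢ`-component of the vector field `X`. -/
def Xy {n : ℕ} (ε : ℝ) (i : Fin (n-1)) (p : Pt n) : ℝ :=
  ε⁻¹ ^ 2 * (2 * r2 p - 1) * zz p * yy i p + ε⁻¹ ^ 2 * (2 * r2 p ^ 2 - 2 * r2 p + 1) * xx i p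

/-- The vector field `X` of the paper, assembled from its components. -/
def XV {n : ℕ} (ε : ℝ) (p : Pt n) : Pt n :=
  (EuclideanSpace.single (idxU n) (Xu ε p) : Pt n) +
  (EuclideanSpace.single (idxV n) (Xv ε p) : Pt n) +
  (EuclideanSpace.single (idxZ n) (Xz ε p) : Pt n) +
  ∑ i : Fin (n-1),
    ((EuclideanSpace.single (idxX i) (Xx ε i p) : Pt n) +
     (EuclideanSpace.single (idxY i) (Xy ε i p) : Pt n))

/-- The 1-form `β = (2r²−1)dz + r²(r²−1)dθ + Σᵢ(xᵢ dyᵢ − yᵢ dxᵢ)` evaluated at `p` on `w`. -/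
def βval {n : ℕ} (p w : Pt n) : ℝ :=
  (2 * r2 p - 1) * zz w + (r2 p - 1) * (uu p * vv w - vv p * uu w)
    + ∑ i : Fin (n-1), (xx i p * yy i w - yy i p * xx i w)

/-- The 2-form `dβ = 4r dr∧dz + 2r(2r²−1)dr∧dθ + 2Σᵢ dxᵢ∧dyᵢ` evaluated at `p` on `(a, b)`. -/
def dβval {n : ℕ} (p a b : Pt n) : ℝ :=
  4 * (uu p * uu a + vv p * vv a) * zz b - 4 * (uu p * uu b + vv p * vv b) * zz a
    + 2 * (2 * r2 p - 1) * (uu a * vv b - vv a * uu b)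
    + 2 * ∑ i : Fin (n-1), (xx i a * yy i b - yy i a * xx i b)

lemma pt_sum_apply {n : ℕ} (j : Fin (2*n+1)) (s : Finset (Fin (n-1))) (f : Fin (n-1) → Pt n) :
    (∑ i ∈ s, f i) j = ∑ i ∈ s, f i j := by
  induction s using Finset.cons_induction with
  | empty => rfl
  | cons a s ha ih => rw [Finset.sum_cons, Finset.sum_cons, ← ih]; rfl

lemma es_single_eq {n : ℕ} (k : Fin (2*n+1)) (c : ℝ) :
    (EuclideanSpace.single k c : Pt n) k = c := by
  rw [EuclideanSpace.single_apply, if_pos rfl]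

lemma es_single_ne {n : ℕ} (j k : Fin (2*n+1)) (c : ℝ) (h : j ≠ k) :
    (EuclideanSpace.single k c : Pt n) j = 0 := by
  rw [EuclideanSpace.single_apply, if_neg h]

section coords
variable {n : ℕ} (hn : 2 ≤ n)

lemma idxU_val : (idxU n).val = 0 := rfl
lemma idxX_val (i : Fin (n-1)) : (idxX i).val = 3 + 2*i.val := rfl
lemma idxY_val (i : Fin (n-1)) : (idxY i).val = 4 + 2*i.val := rfl

include hn

lemma idxV_val' : (idxV n).val = 1 := Nat.mod_eq_of_lt (by omega)
lemma idxZ_val' : (idxZ n).val = 2 := Nat.mod_eq_of_lt (by omega)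

omit hn in
lemma XV_apply (ε : ℝ) (p : Pt n) (j : Fin (2*n+1)) :
    XV ε p j = (EuclideanSpace.single (idxU n) (Xu ε p) : Pt n) j +
      (EuclideanSpace.single (idxV n) (Xv ε p) : Pt n) j +
      (EuclideanSpace.single (idxZ n) (Xz ε p) : Pt n) j +
      ∑ i : Fin (n-1),
        ((EuclideanSpace.single (idxX i) (Xx ε i p) : Pt n) j +
         (EuclideanSpace.single (idxY i) (Xy ε i p) : Pt n) j) := by
  show (_ + _ + _ + _ : Pt n) j = _
  have : (∑ i : Fin (n-1),
      ((EuclideanSpace.single (idxX i) (Xx ε i p) : Pt n) +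
       (EuclideanSpace.single (idxY i) (Xy ε i p) : Pt n))) j
      = ∑ i : Fin (n-1),
        ((EuclideanSpace.single (idxX i) (Xx ε i p) : Pt n) j +
         (EuclideanSpace.single (idxY i) (Xy ε i p) : Pt n) j) := by
    rw [pt_sum_apply]; rfl
  rw [← this]; rfl

lemma uu_XV (ε : ℝ) (p : Pt n) : uu (XV ε p) = Xu ε p := by
  have hv := idxV_val' hn; have hz := idxZ_val' hn
  rw [uu, XV_apply, es_single_eq,
    es_single_ne _ _ _ (Fin.ne_of_val_ne (by rw [idxU_val, hv]; omega)),
    es_single_ne _ _ _ (Fin.ne_of_val_ne (by rw [idxU_val, hz]; omega)),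
    Finset.sum_eq_zero (fun i _ => by
      rw [es_single_ne _ _ _ (Fin.ne_of_val_ne (by rw [idxU_val, idxX_val]; omega)),
        es_single_ne _ _ _ (Fin.ne_of_val_ne (by rw [idxU_val, idxY_val]; omega)), add_zero])]
  ring

lemma vv_XV (ε : ℝ) (p : Pt n) : vv (XV ε p) = Xv ε p := by
  have hv := idxV_val' hn; have hz := idxZ_val' hn
  rw [vv, XV_apply, es_single_eq,
    es_single_ne _ _ _ (Fin.ne_of_val_ne (by rw [idxU_val, hv]; omega)),
    es_single_ne _ _ _ (Fin.ne_of_val_ne (by rw [hv, hz]; omega)),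
    Finset.sum_eq_zero (fun i _ => by
      rw [es_single_ne _ _ _ (Fin.ne_of_val_ne (by rw [hv, idxX_val]; omega)),
        es_single_ne _ _ _ (Fin.ne_of_val_ne (by rw [hv, idxY_val]; omega)), add_zero])]
  ring

lemma zz_XV (ε : ℝ) (p : Pt n) : zz (XV ε p) = Xz ε p := by
  have hv := idxV_val' hn; have hz := idxZ_val' hn
  rw [zz, XV_apply, es_single_eq,
    es_single_ne _ _ _ (Fin.ne_of_val_ne (by rw [idxU_val, hz]; omega)),
    es_single_ne _ _ _ (Fin.ne_of_val_ne (by rw [hv, hz]; omega)),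
    Finset.sum_eq_zero (fun i _ => by
      rw [es_single_ne _ _ _ (Fin.ne_of_val_ne (by rw [hz, idxX_val]; omega)),
        es_single_ne _ _ _ (Fin.ne_of_val_ne (by rw [hz, idxY_val]; omega)), add_zero])]
  ring

lemma xx_XV (ε : ℝ) (p : Pt n) (i : Fin (n-1)) : xx i (XV ε p) = Xx ε i p := by
  have hv := idxV_val' hn; have hz := idxZ_val' hn
  rw [xx, XV_apply,
    es_single_ne (idxX i) _ _ (Fin.ne_of_val_ne (by rw [idxU_val, idxX_val]; omega)),
    es_single_ne (idxX i) _ _ (Fin.ne_of_val_ne (by rw [hv, idxX_val]; omega)),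
    es_single_ne (idxX i) _ _ (Fin.ne_of_val_ne (by rw [hz, idxX_val]; omega))]
  have key : ∀ i' : Fin (n-1),
      ((EuclideanSpace.single (idxX i') (Xx ε i' p) : Pt n) (idxX i) +
       (EuclideanSpace.single (idxY i') (Xy ε i' p) : Pt n) (idxX i))
      = if i' = i then Xx ε i p else 0 := by
    intro i'
    rw [es_single_ne (idxX i) (idxY i') _
      (Fin.ne_of_val_ne (by rw [idxX_val, idxY_val]; omega)), add_zero]
    rcases eq_or_ne i' i with rfl | h
    · rw [es_single_eq, if_pos rfl]
    · rw [es_single_ne (idxX i) (idxX i') _ (Fin.ne_of_val_ne (by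
        rw [idxX_val, idxX_val]
        have := Fin.val_ne_of_ne h; omega)), if_neg h]
  rw [Finset.sum_congr rfl (fun i' _ => key i')]
  simp

lemma yy_XV (ε : ℝ) (p : Pt n) (i : Fin (n-1)) : yy i (XV ε p) = Xy ε i p := by
  have hv := idxV_val' hn; have hz := idxZ_val' hn
  rw [yy, XV_apply,
    es_single_ne (idxY i) _ _ (Fin.ne_of_val_ne (by rw [idxU_val, idxY_val]; omega)),
    es_single_ne (idxY i) _ _ (Fin.ne_of_val_ne (by rw [hv, idxY_val]; omega)),
    es_single_ne (idxY i) _ _ (Fin.ne_of_val_ne (by rw [hz, idxY_val]; omega))]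
  have key : ∀ i' : Fin (n-1),
      ((EuclideanSpace.single (idxX i') (Xx ε i' p) : Pt n) (idxY i) +
       (EuclideanSpace.single (idxY i') (Xy ε i' p) : Pt n) (idxY i))
      = if i' = i then Xy ε i p else 0 := by
    intro i'
    rw [es_single_ne (idxY i) (idxX i') _
      (Fin.ne_of_val_ne (by rw [idxX_val, idxY_val]; omega)), zero_add]
    rcases eq_or_ne i' i with rfl | h
    · rw [es_single_eq, if_pos rfl]
    · rw [es_single_ne (idxY i) (idxY i') _ (Fin.ne_of_val_ne (by
        rw [idxY_val, idxY_val]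
        have := Fin.val_ne_of_ne h; omega)), if_neg h]
  rw [Finset.sum_congr rfl (fun i' _ => key i')]
  simp

end coords
/-- `β(p)(X(p)) = (2r⁴ − 2r² + 1)·(H(p) − 1 − ε)`; in particular
`β(p)(X(p)) = 0` on `Σ̃ = {H = 1 + ε}`. -/
theorem stmt0 (n : ℕ) (hn : 2 ≤ n) (ε : ℝ) (hε : 0 < ε) :
    (∀ p : Pt n,
      βval p (XV ε p) = (2 * r2 p ^ 2 - 2 * r2 p + 1) * (Hfun ε p - 1 - ε)) ∧
    (∀ p : Pt n, Hfun ε p = 1 + ε → βval p (XV ε p) = 0) := by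
  have main : ∀ p : Pt n,
      βval p (XV ε p) = (2 * r2 p ^ 2 - 2 * r2 p + 1) * (Hfun ε p - 1 - ε) := by
    intro p
    rw [βval, uu_XV hn, vv_XV hn, zz_XV hn]
    have hsum : ∑ i : Fin (n-1), (xx i p * yy i (XV ε p) - yy i p * xx i (XV ε p))
        = ε⁻¹ ^ 2 * (2 * r2 p ^ 2 - 2 * r2 p + 1)
          * ∑ i : Fin (n-1), (xx i p ^ 2 + yy i p ^ 2) := by
      rw [Finset.mul_sum]
      refine Finset.sum_congr rfl fun i _ => ?_
      rw [xx_XV hn, yy_XV hn, Xx, Xy]; ring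
    rw [hsum, Xu, Xv, Xz, Hfun]
    simp only [r2]
    ring
  exact ⟨main, fun p hp => by rw [main p, hp]; ring⟩
end
end

section
/- For every point p ∈ ℝ^{2n+1}, the derivative of H at p in the direction X(p) satisfies (fderiv H p)(X(p)) = 2ε⁻²(2r²−1)z·(H(p) − 1 − ε), where r² = u² + v². In particular X is tangent to the hypersurface Σ̃ = {H = 1 + ε}: for every p with H(p) = 1 + ε one has (fderiv H p)(X(p)) = 0. -/
noncomputable section
open scoped BigOperators RealInnerProductSpace

section MyAux

variable {n : ℕ}

lemma sq_hasFDeriv (i : Fin (2*n+1)) (p : Pt n) :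
    HasFDerivAt (fun q : Pt n => q i ^ 2)
      (((2:ℝ) * p i) • (EuclideanSpace.proj i : Pt n →L[ℝ] ℝ)) p := by
  have h := (EuclideanSpace.proj i : Pt n →L[ℝ] ℝ).hasFDerivAt (x := p)
  have h2 : HasFDerivAt (fun q : Pt n => q i * q i)
      (p i • (EuclideanSpace.proj i : Pt n →L[ℝ] ℝ)
        + p i • (EuclideanSpace.proj i : Pt n →L[ℝ] ℝ)) p := h.mul h
  have h3 : ((2:ℝ) * p i) • (EuclideanSpace.proj i : Pt n →L[ℝ] ℝ)
      = p i • (EuclideanSpace.proj i : Pt n →L[ℝ] ℝ)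
        + p i • (EuclideanSpace.proj i : Pt n →L[ℝ] ℝ) := by
    ext w
    simp only [ContinuousLinearMap.add_apply, ContinuousLinearMap.coe_smul', Pi.smul_apply,
      smul_eq_mul]
    ring
  rw [h3]
  simp only [pow_two]
  exact h2

lemma Hfun_hasFDeriv (ε : ℝ) (p : Pt n) :
    HasFDerivAt (Hfun ε : Pt n → ℝ)
      ( (((2:ℝ) * p (idxU n)) • (EuclideanSpace.proj (idxU n) : Pt n →L[ℝ] ℝ)
        + ((2:ℝ) * p (idxV n)) • (EuclideanSpace.proj (idxV n) : Pt n →L[ℝ] ℝ))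
        + (ε⁻¹^2) • ((((2:ℝ) * p (idxZ n)) • (EuclideanSpace.proj (idxZ n) : Pt n →L[ℝ] ℝ))
            + ∑ i : Fin (n-1),
              ((((2:ℝ) * p (idxX i)) • (EuclideanSpace.proj (idxX i) : Pt n →L[ℝ] ℝ))
               + (((2:ℝ) * p (idxY i)) • (EuclideanSpace.proj (idxY i) : Pt n →L[ℝ] ℝ)))) ) p := by
  show HasFDerivAt
      (fun q : Pt n => (q (idxU n) ^ 2 + q (idxV n) ^ 2)
        + ε⁻¹^2 * (q (idxZ n) ^ 2 + ∑ i : Fin (n-1), (q (idxX i) ^ 2 + q (idxY i) ^ 2))) _ p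
  exact ((sq_hasFDeriv _ p).add (sq_hasFDeriv _ p)).add
      (((sq_hasFDeriv _ p).add
        (HasFDerivAt.fun_sum (fun i _ => (sq_hasFDeriv _ p).add (sq_hasFDeriv _ p)))).const_mul _)

lemma XV_coord (hn : 2 ≤ n) (ε : ℝ) (p : Pt n) :
    XV ε p (idxU n) = Xu ε p ∧ XV ε p (idxV n) = Xv ε p ∧ XV ε p (idxZ n) = Xz ε p ∧
    (∀ i : Fin (n-1), XV ε p (idxX i) = Xx ε i p) ∧
    (∀ i : Fin (n-1), XV ε p (idxY i) = Xy ε i p) := by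
  have h1 : (1 : ℕ) % (2*n+1) = 1 := Nat.mod_eq_of_lt (by omega)
  have h2 : (2 : ℕ) % (2*n+1) = 2 := Nat.mod_eq_of_lt (by omega)
  have hadd : ∀ (a b : Pt n) (j : Fin (2*n+1)), (a + b) j = a j + b j := fun _ _ _ => rfl
  have hsum : ∀ (f : Fin (n-1) → Pt n) (j : Fin (2*n+1)),
      (∑ i, f i) j = ∑ i, f i j := fun f j => by rw [WithLp.ofLp_sum, Finset.sum_apply]
  refine ⟨?_, ?_, ?_, fun i₀ => ?_, fun i₀ => ?_⟩ <;>
    simp only [XV, hadd, hsum, EuclideanSpace.single_apply, idxU, idxV, idxZ, idxX, idxY,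
      Fin.mk.injEq, h1, h2]
  · rw [Finset.sum_eq_zero (fun x _ => by rw [if_neg (by omega), if_neg (by omega)]; norm_num)]
    norm_num
  · rw [Finset.sum_eq_zero (fun x _ => by rw [if_neg (by omega), if_neg (by omega)]; norm_num)]
    norm_num
  · rw [Finset.sum_eq_zero (fun x _ => by rw [if_neg (by omega), if_neg (by omega)]; norm_num)]
    norm_num
  · rw [Finset.sum_eq_single i₀
        (fun x _ hne => by
          have hval : (x : ℕ) ≠ (i₀ : ℕ) := fun h => hne (Fin.ext h)
          rw [if_neg (by omega), if_neg (by omega)]; norm_num)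
        (fun h => absurd (Finset.mem_univ i₀) h),
      if_pos rfl, if_neg (by omega), if_neg (by omega), if_neg (by omega), if_neg (by omega)]
    ring
  · rw [Finset.sum_eq_single i₀
        (fun x _ hne => by
          have hval : (x : ℕ) ≠ (i₀ : ℕ) := fun h => hne (Fin.ext h)
          rw [if_neg (by omega), if_neg (by omega)]; norm_num)
        (fun h => absurd (Finset.mem_univ i₀) h),
      if_pos rfl, if_neg (by omega), if_neg (by omega), if_neg (by omega), if_neg (by omega)]
    ring

lemma key_lemma (hn : 2 ≤ n) (ε : ℝ) (p : Pt n) :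
    fderiv ℝ (Hfun ε : Pt n → ℝ) p (XV ε p)
      = 2 * ε⁻¹ ^ 2 * (2 * r2 p - 1) * zz p * (Hfun ε p - 1 - ε) := by
  obtain ⟨hU, hV, hZ, hX, hY⟩ := XV_coord hn ε p
  rw [(Hfun_hasFDeriv ε p).fderiv]
  simp only [ContinuousLinearMap.add_apply, ContinuousLinearMap.coe_smul',
    ContinuousLinearMap.coe_sum', Finset.sum_apply, Pi.smul_apply, PiLp.proj_apply,
    smul_eq_mul, hU, hV, hZ, hX, hY, pow_one]
  have hs : ∑ i : Fin (n-1), (2 * p (idxX i) * Xx ε i p + 2 * p (idxY i) * Xy ε i p)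
      = 2 * ε⁻¹^2 * (2 * r2 p - 1) * zz p * ∑ i : Fin (n-1), (xx i p ^ 2 + yy i p ^ 2) := by
    rw [Finset.mul_sum]
    refine Finset.sum_congr rfl fun i _ => ?_
    show 2 * xx i p * Xx ε i p + 2 * yy i p * Xy ε i p = _
    unfold Xx Xy; ring
  push_cast
  rw [hs]
  show 2 * uu p * Xu ε p + 2 * vv p * Xv ε p + ε⁻¹^2 * (2 * zz p * Xz ε p + _) = _
  unfold Xu Xv Xz Hfun r2
  ring

end MyAux

/-- `(fderiv H p)(X(p)) = 2ε⁻²(2r²−1)z·(H(p) − 1 − ε)`; in particular `X` is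
tangent to `Σ̃ = {H = 1 + ε}`. -/
theorem stmt1 (n : ℕ) (hn : 2 ≤ n) (ε : ℝ) (hε : 0 < ε) :
    (∀ p : Pt n,
      fderiv ℝ (Hfun ε : Pt n → ℝ) p (XV ε p)
        = 2 * ε⁻¹ ^ 2 * (2 * r2 p - 1) * zz p * (Hfun ε p - 1 - ε)) ∧
    (∀ p : Pt n, Hfun ε p = 1 + ε → fderiv ℝ (Hfun ε : Pt n → ℝ) p (XV ε p) = 0) := by
  refine ⟨fun p => key_lemma hn ε p, fun p hp => ?_⟩
  rw [key_lemma hn ε p, hp]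
  ring
end
end

section
/- The boundary ∂Σ is of contact type (outward transversality): assume 0 < ε ≤ 1/10. Then for every point p ∈ ℝ^{2n+1} with H(p) = 1 + ε and z = r − 1 (where r = √(u²+v²)), one has u·X_u(p) + v·X_v(p) − r·X_z(p) > 0; equivalently, (dr − dz)(X) > 0 along ∂Σ = {z = r−1} ∩ Σ̃. -/
noncomputable section
open scoped BigOperators RealInnerProductSpace

lemma key9 (ε r z e : ℝ) (hε : 0 < ε) (hε' : ε ≤ 1/10) (he : e = ε⁻¹)
    (hz : z = r - 1) (hk : r^2 + e^2 * z^2 ≤ 1 + ε) :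
    0 < e^2*(r^2-1)*z*r^2 - r*((r^2-1)^2 + (2*r^2-1)*(e^2*z^2 - ε)) := by
  subst hz he
  have he10 : 10 ≤ ε⁻¹ := by
    rw [le_inv_comm₀ (by norm_num) hε] at *; linarith
  have he100 : 100 ≤ ε⁻¹^2 := by nlinarith
  have h1 : r^2 + 100*(r-1)^2 ≤ 1 + ε := by nlinarith [sq_nonneg (r-1)]
  have hlo : (9:ℝ)/10 ≤ r := by nlinarith
  have hhi : r ≤ 21/20 := by nlinarith
  have hpos : 0 < ε * (2*r^2 - 1) := by nlinarith
  have hq : 94 * (r-1)^2 ≤ ε⁻¹^2 * (r-1)^2 * (1 + r - r^2) := by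
    nlinarith [sq_nonneg (r-1), mul_nonneg (sq_nonneg (r-1)) (by nlinarith : (0:ℝ) ≤ 1+r-r^2)]
  have hq2 : (r-1)^2 * (r+1)^2 ≤ 5 * (r-1)^2 := by nlinarith [sq_nonneg (r-1)]
  have key : 0 < ε⁻¹^2 * (r-1)^2 * (1 + r - r^2) - (r-1)^2*(r+1)^2 + ε*(2*r^2-1) := by
    nlinarith [sq_nonneg (r-1)]
  nlinarith [mul_pos (show (0:ℝ) < r by linarith) key]

/-- The boundary `∂Σ` is of contact type (outward transversality): for
`0 < ε ≤ 1/10`, every point of `∂Σ = {z = r−1} ∩ Σ̃` satisfies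
`u·X_u + v·X_v − r·X_z > 0`, i.e. `(dr − dz)(X) > 0` along `∂Σ`. -/
theorem stmt9 (n : ℕ) (hn : 2 ≤ n) (ε : ℝ) (hε : 0 < ε) (hε' : ε ≤ 1/10) :
    ∀ p : Pt n, Hfun ε p = 1 + ε → zz p = Real.sqrt (r2 p) - 1 →
      0 < uu p * Xu ε p + vv p * Xv ε p - Real.sqrt (r2 p) * Xz ε p := by
  intro p hH hz
  set r := Real.sqrt (r2 p) with hrdef
  have hr2nn : 0 ≤ r2 p := by unfold r2; positivity
  have hrsq : r ^ 2 = r2 p := Real.sq_sqrt hr2nn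
  have hS : 0 ≤ ∑ i : Fin (n-1), (xx i p ^ 2 + yy i p ^ 2) := by positivity
  have hk : r ^ 2 + ε⁻¹ ^ 2 * zz p ^ 2 ≤ 1 + ε := by
    unfold Hfun at hH
    nlinarith [mul_nonneg (sq_nonneg ε⁻¹) hS]
  have hkey := key9 ε r (zz p) ε⁻¹ hε hε' rfl hz hk
  have hexp : uu p * Xu ε p + vv p * Xv ε p - r * Xz ε p =
      ε⁻¹^2*(r^2-1)*(zz p)*r^2 - r*((r^2-1)^2 + (2*r^2-1)*(ε⁻¹^2*(zz p)^2 - ε)) := by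
    simp only [Xu, Xv, Xz, r2] at *
    linear_combination (-(ε⁻¹^2 * zz p * (uu p ^2 + vv p ^2 + r^2 - 1)) + r*(uu p ^2 + vv p ^2 + r^2 - 2) + 2*r*(ε⁻¹^2*(zz p)^2 - ε)) * hrsq
  rw [hexp]; exact hkey
end
end

section
/- First integral of the characteristic foliation: define N : ℝ^{2n+1} → ℝ by N(p) = ε⁻²z² − ε + r² − 1 and D : ℝ^{2n+1} → ℝ by D(p) = r²(r²−1), where r² = u² + v². Then for every point p ∈ ℝ^{2n+1}: (fderiv N p)(X(p)) = 2ε⁻²(2r²−1)z·N(p) and (fderiv D p)(X(p)) = 2ε⁻²(2r²−1)z·D(p). Consequently N(p)·(fderiv D p)(X(p)) = D(p)·(fderiv N p)(X(p)) for all p, i.e. the ratio C = N/D (which parametrizes the leaves {ε⁻²z² = (Cr²−1)(r²−1)+ε} of the foliation F′) is a first integral of X wherever D ≠ 0. -/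
noncomputable section
open scoped BigOperators RealInnerProductSpace

/-- `N(p) = ε⁻²z² − ε + r² − 1`. -/
def Nfun {n : ℕ} (ε : ℝ) (p : Pt n) : ℝ := ε⁻¹ ^ 2 * zz p ^ 2 - ε + r2 p - 1
/-- `D(p) = r²(r²−1)`. -/
def Dfun {n : ℕ} (p : Pt n) : ℝ := r2 p * (r2 p - 1)

lemma proj_hasFDerivAt {n : ℕ} (i : Fin (2*n+1)) (p : Pt n) :
    HasFDerivAt (fun q : Pt n => q i) (EuclideanSpace.proj i : Pt n →L[ℝ] ℝ) p :=
  (EuclideanSpace.proj i : Pt n →L[ℝ] ℝ).hasFDerivAt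

lemma hasFDerivAt_N {n : ℕ} (ε : ℝ) (p : Pt n) :
    HasFDerivAt (Nfun ε : Pt n → ℝ)
      ((2 * ε⁻¹ ^ 2 * zz p) • (EuclideanSpace.proj (idxZ n) : Pt n →L[ℝ] ℝ)
        + (2 * uu p) • (EuclideanSpace.proj (idxU n) : Pt n →L[ℝ] ℝ)
        + (2 * vv p) • (EuclideanSpace.proj (idxV n) : Pt n →L[ℝ] ℝ)) p := by
  have hu := proj_hasFDerivAt (idxU n) p
  have hv := proj_hasFDerivAt (idxV n) p
  have hz := proj_hasFDerivAt (idxZ n) p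
  have key : (Nfun ε : Pt n → ℝ) = fun q =>
      (ε⁻¹ ^ 2 * (q (idxZ n) * q (idxZ n)) + (q (idxU n) * q (idxU n)
        + q (idxV n) * q (idxV n))) - (ε + 1) := by
    funext q; simp only [Nfun, zz, r2, uu, vv]; ring
  rw [key]
  refine ((((hz.mul hz).const_mul (ε⁻¹ ^ 2)).add
    ((hu.mul hu).add (hv.mul hv))).sub_const (ε + 1)).congr_fderiv ?_
  ext w
  simp only [ContinuousLinearMap.add_apply, ContinuousLinearMap.smul_apply,
    ContinuousLinearMap.sub_apply, ContinuousLinearMap.coe_smul', Pi.smul_apply,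
    PiLp.proj_apply, smul_eq_mul, zz, uu, vv]
  ring

lemma hasFDerivAt_D {n : ℕ} (p : Pt n) :
    HasFDerivAt (Dfun : Pt n → ℝ)
      ((2 * uu p * (2 * r2 p - 1)) • (EuclideanSpace.proj (idxU n) : Pt n →L[ℝ] ℝ)
        + (2 * vv p * (2 * r2 p - 1)) • (EuclideanSpace.proj (idxV n) : Pt n →L[ℝ] ℝ)) p := by
  have hu := proj_hasFDerivAt (idxU n) p
  have hv := proj_hasFDerivAt (idxV n) p
  have hr2 : HasFDerivAt (fun q : Pt n => q (idxU n) * q (idxU n) + q (idxV n) * q (idxV n))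
      ((uu p • (EuclideanSpace.proj (idxU n) : Pt n →L[ℝ] ℝ)
          + uu p • (EuclideanSpace.proj (idxU n) : Pt n →L[ℝ] ℝ))
        + (vv p • (EuclideanSpace.proj (idxV n) : Pt n →L[ℝ] ℝ)
          + vv p • (EuclideanSpace.proj (idxV n) : Pt n →L[ℝ] ℝ))) p :=
    (hu.mul hu).add (hv.mul hv)
  have key : (Dfun : Pt n → ℝ) = fun q =>
      (q (idxU n) * q (idxU n) + q (idxV n) * q (idxV n)) *
        ((q (idxU n) * q (idxU n) + q (idxV n) * q (idxV n)) - 1) := by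
    funext q; simp only [Dfun, r2, uu, vv]; ring
  rw [key]
  refine (hr2.mul (hr2.sub_const 1)).congr_fderiv ?_
  ext w
  simp only [ContinuousLinearMap.add_apply, ContinuousLinearMap.smul_apply,
    ContinuousLinearMap.sub_apply, ContinuousLinearMap.coe_smul', Pi.smul_apply,
    PiLp.proj_apply, smul_eq_mul, uu, vv, r2]
  ring

lemma XV_coords {n : ℕ} (hn : 1 ≤ n) (ε : ℝ) (p : Pt n) :
    XV ε p (idxU n) = Xu ε p ∧ XV ε p (idxV n) = Xv ε p ∧ XV ε p (idxZ n) = Xz ε p := by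
  have h1 : (1 : ℕ) % (2*n+1) = 1 := Nat.mod_eq_of_lt (by omega)
  have h2 : (2 : ℕ) % (2*n+1) = 2 := Nat.mod_eq_of_lt (by omega)
  have hsum : ∀ j : Fin (2*n+1), j.val < 3 →
      (∑ i : Fin (n-1),
        ((EuclideanSpace.single (idxX i) (Xx ε i p) : Pt n) +
         (EuclideanSpace.single (idxY i) (Xy ε i p) : Pt n))) j = 0 := by
    intro j hj
    have : (∑ i : Fin (n-1),
        ((EuclideanSpace.single (idxX i) (Xx ε i p) : Pt n) +
         (EuclideanSpace.single (idxY i) (Xy ε i p) : Pt n))) j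
        = ∑ i : Fin (n-1),
        ((EuclideanSpace.single (idxX i) (Xx ε i p) : Pt n) j +
         (EuclideanSpace.single (idxY i) (Xy ε i p) : Pt n) j) := by
      rw [WithLp.ofLp_sum, Finset.sum_apply]; rfl
    rw [this]
    refine Finset.sum_eq_zero fun i _ => ?_
    rw [EuclideanSpace.single_apply, EuclideanSpace.single_apply, if_neg, if_neg]
    · simp
    · intro h; have := congrArg Fin.val h; simp only [idxY] at this; omega
    · intro h; have := congrArg Fin.val h; simp only [idxX] at this; omega
  have hUV : idxU n ≠ idxV n := by
    intro h; have := congrArg Fin.val h; simp only [idxU, idxV, h1] at this; omega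
  have hUZ : idxU n ≠ idxZ n := by
    intro h; have := congrArg Fin.val h; simp only [idxU, idxZ, h2] at this; omega
  have hVU : idxV n ≠ idxU n := Ne.symm hUV
  have hVZ : idxV n ≠ idxZ n := by
    intro h; have := congrArg Fin.val h; simp only [idxV, idxZ, h1, h2] at this; omega
  refine ⟨?_, ?_, ?_⟩
  · have := hsum (idxU n) (by simp [idxU])
    simp only [XV, PiLp.add_apply, this, add_zero, EuclideanSpace.single_apply,
      if_pos rfl, if_neg hUV, if_neg hUZ]
    simp
  · have := hsum (idxV n) (by simp [idxV, h1])
    simp only [XV, PiLp.add_apply, this, add_zero, EuclideanSpace.single_apply,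
      if_pos rfl, if_neg hVU, if_neg hVZ]
    simp
  · have := hsum (idxZ n) (by simp [idxZ, h2])
    simp only [XV, PiLp.add_apply, this, add_zero, EuclideanSpace.single_apply,
      if_pos rfl, if_neg (Ne.symm hUZ), if_neg (Ne.symm hVZ)]
    simp

/-- First integral of the characteristic foliation:
`(fderiv N p)(X(p)) = 2ε⁻²(2r²−1)z·N(p)`, `(fderiv D p)(X(p)) = 2ε⁻²(2r²−1)z·D(p)`, and
consequently `N·(fderiv D)(X) = D·(fderiv N)(X)` everywhere, so `C = N/D` is a first integral
of `X` wherever `D ≠ 0`. -/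
theorem stmt12 (n : ℕ) (hn : 2 ≤ n) (ε : ℝ) (hε : 0 < ε) :
    (∀ p : Pt n,
      fderiv ℝ (Nfun ε : Pt n → ℝ) p (XV ε p)
        = 2 * ε⁻¹ ^ 2 * (2 * r2 p - 1) * zz p * Nfun ε p) ∧
    (∀ p : Pt n,
      fderiv ℝ (Dfun : Pt n → ℝ) p (XV ε p)
        = 2 * ε⁻¹ ^ 2 * (2 * r2 p - 1) * zz p * Dfun p) ∧
    (∀ p : Pt n,
      Nfun ε p * fderiv ℝ (Dfun : Pt n → ℝ) p (XV ε p)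
        = Dfun p * fderiv ℝ (Nfun ε : Pt n → ℝ) p (XV ε p)) := by
  have hn1 : 1 ≤ n := by omega
  have hN : ∀ p : Pt n,
      fderiv ℝ (Nfun ε : Pt n → ℝ) p (XV ε p)
        = 2 * ε⁻¹ ^ 2 * (2 * r2 p - 1) * zz p * Nfun ε p := by
    intro p
    obtain ⟨hU, hV, hZ⟩ := XV_coords hn1 ε p
    rw [(hasFDerivAt_N ε p).fderiv]
    simp only [ContinuousLinearMap.add_apply, ContinuousLinearMap.smul_apply,
      PiLp.proj_apply, smul_eq_mul, hU, hV, hZ]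
    simp only [Xu, Xv, Xz, Nfun, r2]
    ring
  have hD : ∀ p : Pt n,
      fderiv ℝ (Dfun : Pt n → ℝ) p (XV ε p)
        = 2 * ε⁻¹ ^ 2 * (2 * r2 p - 1) * zz p * Dfun p := by
    intro p
    obtain ⟨hU, hV, hZ⟩ := XV_coords hn1 ε p
    rw [(hasFDerivAt_D p).fderiv]
    simp only [ContinuousLinearMap.add_apply, ContinuousLinearMap.smul_apply,
      PiLp.proj_apply, smul_eq_mul, hU, hV]
    simp only [Xu, Xv, Dfun, r2]
    ring
  exact ⟨hN, hD, fun p => by rw [hN p, hD p]; ring⟩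
end
end

section
/- The invariant torus over the hyperbolic point: set r₀² = 1 + ε − √(ε(1+ε)) and n₀² = ε²√(ε(1+ε)). Then (r₀²−1)² − ε(2r₀²−1) = 0, and for every point p ∈ ℝ^{2n+1} with u² + v² = r₀², z = 0, and Σᵢ(xᵢ² + yᵢ²) = n₀², one has: H(p) = 1 + ε (so p ∈ Σ̃), X_z(p) = 0, u·X_u(p) + v·X_v(p) = 0, and Σᵢ(xᵢ·X_{xᵢ}(p) + yᵢ·X_{yᵢ}(p)) = 0. In particular X is tangent to the submanifold H = {0} × S¹(r₀) × S^{2n−3}(n₀), the preimage of the hyperbolic singular point of the reduced foliation. -/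
noncomputable section
open scoped BigOperators RealInnerProductSpace

/-- The invariant torus over the hyperbolic point: with
`r₀² = 1 + ε − √(ε(1+ε))` and `n₀² = ε²√(ε(1+ε))`, one has `(r₀²−1)² − ε(2r₀²−1) = 0`, and every
`p` with `u² + v² = r₀²`, `z = 0`, `Σᵢ(xᵢ² + yᵢ²) = n₀²` satisfies `H(p) = 1 + ε`, `X_z(p) = 0`,
`u·X_u + v·X_v = 0` and `Σᵢ(xᵢ·X_{xᵢ} + yᵢ·X_{yᵢ}) = 0`; so `X` is tangent to
`H = {0} × S¹(r₀) × S^{2n−3}(n₀)`. -/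
theorem stmt13 (n : ℕ) (hn : 2 ≤ n) (ε : ℝ) (hε : 0 < ε) :
    ((1 + ε - Real.sqrt (ε * (1+ε))) - 1) ^ 2
      - ε * (2 * (1 + ε - Real.sqrt (ε * (1+ε))) - 1) = 0 ∧
    ∀ p : Pt n,
      r2 p = 1 + ε - Real.sqrt (ε * (1+ε)) →
      zz p = 0 →
      (∑ i : Fin (n-1), (xx i p ^ 2 + yy i p ^ 2)) = ε ^ 2 * Real.sqrt (ε * (1+ε)) →
      Hfun ε p = 1 + ε ∧
      Xz ε p = 0 ∧
      uu p * Xu ε p + vv p * Xv ε p = 0 ∧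
      (∑ i : Fin (n-1), (xx i p * Xx ε i p + yy i p * Xy ε i p)) = 0 := by
  have hε' : ε ≠ 0 := ne_of_gt hε
  have hs : Real.sqrt (ε * (1+ε)) ^ 2 = ε * (1+ε) :=
    Real.sq_sqrt (by nlinarith)
  have key : ((1 + ε - Real.sqrt (ε * (1+ε))) - 1) ^ 2
      - ε * (2 * (1 + ε - Real.sqrt (ε * (1+ε))) - 1) = 0 := by nlinarith [hs]
  refine ⟨key, fun p hr hz hsum => ?_⟩
  refine ⟨?_, ?_, ?_, ?_⟩
  · simp only [Hfun, hr, hz, hsum]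
    field_simp
    ring
  · simp only [Xz, hr, hz]
    nlinarith [key]
  · simp only [Xu, Xv, hz]; ring
  · rw [Finset.sum_eq_zero]
    intro i _
    simp only [Xx, Xy, hz]; ring
end
end
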